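/- arXiv:1602.04178 — 4 statements merged into one kernel-verified Lean document; each statement's English description precedes it below -/
import Mathlib

section
/- Let H be a real inner product space, S₁ and S₂ nonempty convex subsets, q ∈ S₁ and q̃ ∈ S₂. If q̃ is a nearest point of S₂ to q (i.e. ‖q - q̃‖ ≤ ‖q - z‖ for all z ∈ S₂) and q is a nearest point of S₁ to q̃, then ‖q - q̃‖ ≤ ‖z₁ - z₂‖ for all z₁ ∈ S₁ and z₂ ∈ S₂. -/
open RealInnerProductSpace

lemma nearest_inner_le_zero {H : Type*} [NormedAddCommGroup H] [InnerProductSpace ℝ H]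
    {K : Set H} (hc : Convex ℝ K) {u v : H} (hv : v ∈ K)
    (hnear : ∀ z ∈ K, ‖u - v‖ ≤ ‖u - z‖) : ∀ w ∈ K, ⟪u - v, w - v⟫ ≤ 0 := by
  rw [← norm_eq_iInf_iff_real_inner_le_zero hc hv]
  haveI : Nonempty K := ⟨⟨v, hv⟩⟩
  refine le_antisymm (le_ciInf fun w => hnear w w.2) ?_
  exact ciInf_le ⟨0, fun _ ⟨_, h⟩ => h ▸ norm_nonneg _⟩ (⟨v, hv⟩ : K)

/-- Double-projection property (DP₁ ⇒ DP₂) in a real inner product space: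
if `qt` is a nearest point of `S₂` to `q` and `q` is a nearest point of `S₁`
to `qt`, then `‖q - qt‖` realizes the distance between `S₁` and `S₂`. -/
theorem double_projection_DP1_implies_DP2
    {H : Type*} [NormedAddCommGroup H] [InnerProductSpace ℝ H]
    (S₁ S₂ : Set H) (hS₁ : S₁.Nonempty) (hS₂ : S₂.Nonempty)
    (hc₁ : Convex ℝ S₁) (hc₂ : Convex ℝ S₂)
    (q qt : H) (hq : q ∈ S₁) (hqt : qt ∈ S₂)
    (hnear₂ : ∀ z ∈ S₂, ‖q - qt‖ ≤ ‖q - z‖)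
    (hnear₁ : ∀ z ∈ S₁, ‖qt - q‖ ≤ ‖qt - z‖) :
    ∀ z₁ ∈ S₁, ∀ z₂ ∈ S₂, ‖q - qt‖ ≤ ‖z₁ - z₂‖ := by
  intro z₁ hz₁ z₂ hz₂
  have h2 : ⟪q - qt, z₂ - qt⟫ ≤ 0 := nearest_inner_le_zero hc₂ hqt hnear₂ z₂ hz₂
  have h1 : ⟪qt - q, z₁ - q⟫ ≤ 0 := nearest_inner_le_zero hc₁ hq hnear₁ z₁ hz₁
  have key : ‖q - qt‖ ^ 2 ≤ ⟪q - qt, z₁ - z₂⟫ := by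
    have h1' : ⟪q - qt, z₁ - q⟫ ≥ 0 := by
      have := h1; rw [show qt - q = -(q - qt) by abel, inner_neg_left] at this; linarith
    have expand : ⟪q - qt, z₁ - z₂⟫
        = ⟪q - qt, z₁ - q⟫ + ‖q - qt‖ ^ 2 - ⟪q - qt, z₂ - qt⟫ := by
      rw [← real_inner_self_eq_norm_sq]
      rw [← inner_add_right, ← inner_sub_right]
      congr 1
      abel
    linarith
  have cs : ⟪q - qt, z₁ - z₂⟫ ≤ ‖q - qt‖ * ‖z₁ - z₂‖ := real_inner_le_norm _ _
  nlinarith [norm_nonneg (q - qt), norm_nonneg (z₁ - z₂)]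
end

section
/- Let F : ℝⁿ → [0,∞) be a reversible Minkowski norm (C² away from 0, absolutely homogeneous, with positive definite Hessian g_y of F²/2 for y ≠ 0), inducing the distance d_F(p,q) = F(q - p). Let S₁, S₂ ⊆ ℝⁿ be closed convex sets, q ∈ S₁, and q̃ ∈ S₂. If g_{q̃-q}(q̃ - q, z₁ - q) ≤ 0 for all z₁ ∈ S₁ and g_{q̃-q}(q - q̃, z₂ - q̃) ≤ 0 for all z₂ ∈ S₂ (i.e., q = P_{S₁}(q̃) and q̃ = P_{S₂}(q)), then F(q̃ - q) ≤ F(z₂ - z₁) for all z₁ ∈ S₁ and z₂ ∈ S₂. -/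
/-!
Write `φ = F² / 2` and `y = q̃ - q`. Differentiating the homogeneity relations `φ (t • x) = t² φ x`
and `Dφ (t • x) = t • Dφ x` at `t = 1` gives the Euler identities `Dφ(y) y = F(y)²` and
`D²φ(y) y = Dφ(y)`, so `g_y(y, w) = Dφ(y) w` and the two projection conditions add up to
`F(y)² ≤ Dφ(y) (z₂ - z₁)`. Convexity of `φ` along segments avoiding `0` gives the
Cauchy–Schwarz type bound `Dφ(y) u ≤ F(y) F(u)`, and dividing by `F(y) > 0` concludes.
-/

open Set

section Calculus

variable {E V : Type*} [NormedAddCommGroup E] [NormedSpace ℝ E]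
  [NormedAddCommGroup V] [NormedSpace ℝ V]

theorem fderiv_apply_const_apply {c : E → E →L[ℝ] V} {y : E} (hc : DifferentiableAt ℝ c y)
    (v w : E) : fderiv ℝ (fun z => c z v) y w = fderiv ℝ c y w v := by
  simp [fderiv_clm_apply hc (differentiableAt_const v)]

theorem smul_fderiv_smul_of_homogeneous {φ : E → V} {t : ℝ} {k : ℕ}
    (h : ∀ z, φ (t • z) = t ^ k • φ z) (x : E) :
    t • fderiv ℝ φ (t • x) = t ^ k • fderiv ℝ φ x := by
  rw [← fderiv_comp_smul, show (φ <| t • ·) = t ^ k • φ from funext h, fderiv_const_smul_field]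
  rfl

theorem fderiv_apply_self_of_homogeneous {G : E → V} {k : ℕ} {x : E}
    (hG : DifferentiableAt ℝ G x) (h : ∀ t : ℝ, 0 < t → G (t • x) = t ^ k • G x) :
    fderiv ℝ G x x = (k : ℝ) • G x := by
  have hray : HasDerivAt (fun t : ℝ => G (t • x)) (fderiv ℝ G x x) 1 := by
    simpa [Function.comp_def] using hG.hasFDerivAt.comp_hasDerivAt_of_eq (1 : ℝ)
      ((hasDerivAt_id (1 : ℝ)).smul_const x) (one_smul ℝ x).symm
  have hpow : HasDerivAt (fun t : ℝ => G (t • x)) ((k : ℝ) • G x) 1 := by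
    have : HasDerivAt (fun t : ℝ => t ^ k • G x) ((k : ℝ) • G x) 1 := by
      simpa using (hasDerivAt_pow k (1 : ℝ)).smul_const (G x)
    exact this.congr_of_eventuallyEq ((eventually_gt_nhds one_pos).mono h)
  exact hray.unique hpow

theorem fderiv_apply_sub_le_of_hessian_nonneg {φ : E → ℝ} {U : Set E} (hU : IsOpen U)
    (hφ : ContDiffOn ℝ 2 φ U) (hess : ∀ x ∈ U, ∀ v, 0 ≤ fderiv ℝ (fderiv ℝ φ) x v v)
    {y u : E} (hyu : segment ℝ y u ⊆ U) :
    fderiv ℝ φ y (u - y) ≤ φ u - φ y := by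
  set c : ℝ → E := fun t => y + t • (u - y)
  have hc : ∀ t, HasDerivAt c (u - y) t := fun t => by
    simpa [c] using ((hasDerivAt_id t).smul_const (u - y)).const_add y
  have hcU : ∀ t ∈ Icc (0 : ℝ) 1, c t ∈ U := fun t ht =>
    hyu (segment_eq_image' ℝ y u ▸ mem_image_of_mem _ ht)
  have hφc : ∀ t ∈ Icc (0 : ℝ) 1, ContDiffAt ℝ 2 φ (c t) := fun t ht =>
    hφ.contDiffAt (hU.mem_nhds (hcU t ht))
  have hd1 : ∀ t ∈ Icc (0 : ℝ) 1, HasDerivAt (φ ∘ c) (fderiv ℝ φ (c t) (u - y)) t :=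
    fun t ht => ((hφc t ht).differentiableAt two_ne_zero).hasFDerivAt.comp_hasDerivAt t (hc t)
  have hd2 : ∀ t ∈ Icc (0 : ℝ) 1, HasDerivAt (fun s => fderiv ℝ φ (c s) (u - y))
      (fderiv ℝ (fderiv ℝ φ) (c t) (u - y) (u - y)) t := fun t ht => by
    have hA := (((hφc t ht).fderiv_right (m := 1) le_rfl).differentiableAt
      one_ne_zero).hasFDerivAt.comp_hasDerivAt t (hc t)
    simpa using hA.clm_apply (hasDerivAt_const t (u - y))
  have hconv : ConvexOn ℝ (Icc 0 1) (φ ∘ c) := by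
    refine convexOn_of_hasDerivWithinAt2_nonneg (convex_Icc 0 1)
      (fun t ht => (hd1 t ht).continuousAt.continuousWithinAt)
      (fun t ht => (hd1 t (interior_subset ht)).hasDerivWithinAt)
      (fun t ht => (hd2 t (interior_subset ht)).hasDerivWithinAt)
      (fun t ht => hess _ (hcU t (interior_subset ht)) (u - y))
  have := hconv.le_slope_of_hasDerivAt (left_mem_Icc.2 zero_le_one) (right_mem_Icc.2 zero_le_one)
    zero_lt_one (hd1 0 (left_mem_Icc.2 zero_le_one))
  simpa [c, slope_def_field] using this

end Calculus

section Minkowski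

variable {E : Type*} [NormedAddCommGroup E] [NormedSpace ℝ E]

noncomputable def halfSq (F : E → ℝ) (y : E) : ℝ := F y ^ 2 / 2

/-- `hessian_pos` is the positive definiteness of `g_y(v, w) = D(z ↦ D(F²/2)(z) v)(y) w`. -/
structure IsMinkowskiNorm (F : E → ℝ) : Prop where
  nonneg : ∀ y, 0 ≤ F y
  contDiffOn : ContDiffOn ℝ 2 F {0}ᶜ
  homogeneous : ∀ (t : ℝ) y, F (t • y) = |t| * F y
  hessian_pos : ∀ y ≠ 0, ∀ v ≠ 0, 0 < fderiv ℝ (fun z => fderiv ℝ (halfSq F) z v) y v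

namespace IsMinkowskiNorm

variable {F : E → ℝ} {x y : E}

theorem halfSq_smul (hF : IsMinkowskiNorm F) (t : ℝ) (z : E) :
    halfSq F (t • z) = t ^ 2 • halfSq F z := by
  simp only [halfSq, hF.homogeneous, mul_pow, sq_abs, smul_eq_mul]
  ring

theorem contDiffOn_halfSq (hF : IsMinkowskiNorm F) : ContDiffOn ℝ 2 (halfSq F) {0}ᶜ :=
  (hF.contDiffOn.pow 2).div_const 2

theorem contDiffAt_halfSq (hF : IsMinkowskiNorm F) (hx : x ≠ 0) :
    ContDiffAt ℝ 2 (halfSq F) x :=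
  hF.contDiffOn_halfSq.contDiffAt (isOpen_compl_singleton.mem_nhds hx)

theorem differentiableAt_fderiv_halfSq (hF : IsMinkowskiNorm F) (hx : x ≠ 0) :
    DifferentiableAt ℝ (fderiv ℝ (halfSq F)) x :=
  ((hF.contDiffAt_halfSq hx).fderiv_right (m := 1) le_rfl).differentiableAt one_ne_zero

theorem fderiv_fderiv_halfSq_apply (hF : IsMinkowskiNorm F) (hy : y ≠ 0) (v w : E) :
    fderiv ℝ (fun z => fderiv ℝ (halfSq F) z v) y w = fderiv ℝ (fderiv ℝ (halfSq F)) y v w := by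
  rw [fderiv_apply_const_apply (hF.differentiableAt_fderiv_halfSq hy),
    (hF.contDiffAt_halfSq hy).isSymmSndFDerivAt (by simp) w v]

theorem fderiv_halfSq_smul (hF : IsMinkowskiNorm F) {t : ℝ} (ht : t ≠ 0) (x : E) :
    fderiv ℝ (halfSq F) (t • x) = t • fderiv ℝ (halfSq F) x := by
  apply smul_right_injective _ ht
  simp only [smul_fderiv_smul_of_homogeneous (hF.halfSq_smul t), smul_smul, ← sq]

theorem fderiv_halfSq_apply_self (hF : IsMinkowskiNorm F) (hx : x ≠ 0) :
    fderiv ℝ (halfSq F) x x = F x ^ 2 := by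
  rw [fderiv_apply_self_of_homogeneous ((hF.contDiffAt_halfSq hx).differentiableAt two_ne_zero)
    fun t _ => hF.halfSq_smul t x, halfSq]
  simp only [Nat.cast_ofNat, smul_eq_mul]
  ring

theorem fderiv_fderiv_halfSq_apply_self (hF : IsMinkowskiNorm F) (hx : x ≠ 0) :
    fderiv ℝ (fderiv ℝ (halfSq F)) x x = fderiv ℝ (halfSq F) x := by
  simpa using fderiv_apply_self_of_homogeneous (k := 1) (hF.differentiableAt_fderiv_halfSq hx)
    fun t ht => by rw [pow_one, hF.fderiv_halfSq_smul ht.ne']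

theorem hessian_nonneg (hF : IsMinkowskiNorm F) (hx : x ≠ 0) (v : E) :
    0 ≤ fderiv ℝ (fderiv ℝ (halfSq F)) x v v := by
  rcases eq_or_ne v 0 with rfl | hv
  · simp
  · exact (hF.fderiv_fderiv_halfSq_apply hx v v ▸ hF.hessian_pos x hx v hv).le

theorem pos (hF : IsMinkowskiNorm F) (hx : x ≠ 0) : 0 < F x := by
  have h := hF.hessian_pos x hx x hx
  rw [hF.fderiv_fderiv_halfSq_apply hx, hF.fderiv_fderiv_halfSq_apply_self hx,
    hF.fderiv_halfSq_apply_self hx] at h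
  exact (hF.nonneg x).lt_of_ne fun h0 => by simp [← h0] at h

theorem fderiv_halfSq_apply_le_sq (hF : IsMinkowskiNorm F) (hy : y ≠ 0) {v : E}
    (hv : F v = F y) : fderiv ℝ (halfSq F) y v ≤ F y ^ 2 := by
  by_cases h0 : (0 : E) ∈ segment ℝ y v
  · -- then `v` is a nonpositive multiple of `y`
    obtain ⟨a, b, ha, hb, hab, hzero⟩ := h0
    have hb0 : 0 < b := hb.lt_of_ne' fun hb0 => by simp_all
    have h := congrArg (fderiv ℝ (halfSq F) y) hzero
    rw [map_add, map_smul, map_smul, hF.fderiv_halfSq_apply_self hy, map_zero, smul_eq_mul,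
      smul_eq_mul] at h
    nlinarith [sq_nonneg (F y)]
  · have h := fderiv_apply_sub_le_of_hessian_nonneg isOpen_compl_singleton hF.contDiffOn_halfSq
      (fun _ hx => hF.hessian_nonneg hx) fun z hz (hz0 : z = 0) => h0 (hz0 ▸ hz)
    rw [map_sub, hF.fderiv_halfSq_apply_self hy, halfSq, halfSq, hv] at h
    linarith

theorem fderiv_halfSq_apply_le_mul (hF : IsMinkowskiNorm F) (hy : y ≠ 0) (u : E) :
    fderiv ℝ (halfSq F) y u ≤ F y * F u := by
  rcases eq_or_ne u 0 with rfl | hu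
  · simpa using mul_nonneg (hF.nonneg y) (hF.nonneg 0)
  have hFu := hF.pos hu
  have hs : 0 < F y / F u := div_pos (hF.pos hy) hFu
  have h := hF.fderiv_halfSq_apply_le_sq hy (v := (F y / F u) • u)
    (by rw [hF.homogeneous, abs_of_pos hs, div_mul_cancel₀ _ hFu.ne'])
  rw [map_smul, smul_eq_mul, div_mul_eq_mul_div, div_le_iff₀ hFu] at h
  nlinarith [hF.pos hy]

theorem le_of_sq_le_fderiv_halfSq (hF : IsMinkowskiNorm F) (hy : y ≠ 0) {u : E}
    (h : F y ^ 2 ≤ fderiv ℝ (halfSq F) y u) : F y ≤ F u := by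
  have := h.trans (hF.fderiv_halfSq_apply_le_mul hy u)
  nlinarith [hF.pos hy]

end IsMinkowskiNorm

end Minkowski

theorem minkowski_double_projection_general
    {n : ℕ} (F : EuclideanSpace ℝ (Fin n) → ℝ)
    (g : EuclideanSpace ℝ (Fin n) → EuclideanSpace ℝ (Fin n) → EuclideanSpace ℝ (Fin n) → ℝ)
    (hF_nonneg : ∀ y, 0 ≤ F y)
    (hF_smooth : ContDiffOn ℝ 2 F {(0 : EuclideanSpace ℝ (Fin n))}ᶜ)
    (hF_homog : ∀ t : ℝ, ∀ y, F (t • y) = |t| * F y)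
    (hg_def : ∀ y ≠ 0, ∀ v w,
      g y v w = fderiv ℝ (fun z => fderiv ℝ (fun u => F u ^ 2 / 2) z v) y w)
    (hg_posdef : ∀ y ≠ 0, ∀ v ≠ 0, 0 < g y v v)
    (S₁ S₂ : Set (EuclideanSpace ℝ (Fin n)))
    (q qt : EuclideanSpace ℝ (Fin n)) (hne : qt ≠ q)
    (hproj₁ : ∀ z₁ ∈ S₁, g (qt - q) (qt - q) (z₁ - q) ≤ 0)
    (hproj₂ : ∀ z₂ ∈ S₂, g (qt - q) (q - qt) (z₂ - qt) ≤ 0) :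
    ∀ z₁ ∈ S₁, ∀ z₂ ∈ S₂, F (qt - q) ≤ F (z₂ - z₁) := by
  intro z₁ hz₁ z₂ hz₂
  have hF : IsMinkowskiNorm F :=
    ⟨hF_nonneg, hF_smooth, hF_homog, fun y hy v hv => hg_def y hy v v ▸ hg_posdef y hy v hv⟩
  set y := qt - q
  have hy : y ≠ 0 := sub_ne_zero.mpr hne
  have hg : ∀ v w, g y v w = fderiv ℝ (fderiv ℝ (halfSq F)) y v w := fun v w =>
    (hg_def y hy v w).trans (hF.fderiv_fderiv_halfSq_apply hy v w)
  have h₁ := hproj₁ z₁ hz₁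
  have h₂ := hproj₂ z₂ hz₂
  rw [hg, hF.fderiv_fderiv_halfSq_apply_self hy] at h₁
  rw [hg, ← neg_sub qt q, map_neg, neg_apply,
    hF.fderiv_fderiv_halfSq_apply_self hy] at h₂
  refine hF.le_of_sq_le_fderiv_halfSq hy ?_
  calc F y ^ 2 = fderiv ℝ (halfSq F) y y := (hF.fderiv_halfSq_apply_self hy).symm
    _ ≤ fderiv ℝ (halfSq F) y (z₂ - qt) + fderiv ℝ (halfSq F) y y
        - fderiv ℝ (halfSq F) y (z₁ - q) := by linarith
    _ = fderiv ℝ (halfSq F) y (z₂ - z₁) := by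
      rw [← map_add, ← map_sub]
      congr 1
      simp only [y]
      abel

/-- Global double-projection property of reversible Finsler-Minkowski spaces
(Theorem 2.5): if `q ∈ S₁` and `qt ∈ S₂` are mutual metric projections
(characterized variationally through the osculating bilinear form
`g_{qt-q}`), then `F(qt - q) ≤ F(z₂ - z₁)` for all `z₁ ∈ S₁`, `z₂ ∈ S₂`. -/
theorem minkowski_double_projection
    {n : ℕ} (F : EuclideanSpace ℝ (Fin n) → ℝ)
    (g : EuclideanSpace ℝ (Fin n) → EuclideanSpace ℝ (Fin n) → EuclideanSpace ℝ (Fin n) → ℝ)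
    (hF_nonneg : ∀ y, 0 ≤ F y)
    (hF_smooth : ContDiffOn ℝ 2 F {(0 : EuclideanSpace ℝ (Fin n))}ᶜ)
    (hF_homog : ∀ t : ℝ, ∀ y, F (t • y) = |t| * F y)
    (hg_def : ∀ y ≠ 0, ∀ v w,
      g y v w = fderiv ℝ (fun z => fderiv ℝ (fun u => F u ^ 2 / 2) z v) y w)
    (hg_posdef : ∀ y ≠ 0, ∀ v ≠ 0, 0 < g y v v)
    (S₁ S₂ : Set (EuclideanSpace ℝ (Fin n)))
    (hS₁ : IsClosed S₁) (hS₂ : IsClosed S₂)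
    (hc₁ : Convex ℝ S₁) (hc₂ : Convex ℝ S₂)
    (q qt : EuclideanSpace ℝ (Fin n)) (hq : q ∈ S₁) (hqt : qt ∈ S₂) (hne : qt ≠ q)
    (hproj₁ : ∀ z₁ ∈ S₁, g (qt - q) (qt - q) (z₁ - q) ≤ 0)
    (hproj₂ : ∀ z₂ ∈ S₂, g (qt - q) (q - qt) (z₂ - qt) ≤ 0) :
    ∀ z₁ ∈ S₁, ∀ z₂ ∈ S₂, F (qt - q) ≤ F (z₂ - z₁) :=
  minkowski_double_projection_general F g hF_nonneg hF_smooth hF_homog hg_def hg_posdef S₁ S₂ q qt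
    hne hproj₁ hproj₂
end

section
/- Let a, b, c ∈ (0, π) with a + b + c < π, and suppose cos c - cos a · cos b ≤ 0 and cos a - cos c · cos b ≤ 0 (where a = d(p,q), b = d(q,s), c = d(p,s) are spherical side lengths). Then (1 - cos b)(cos a + cos c) ≤ 0, and rewriting, sin²(b/2) · cos((a+c)/2) · cos((a-c)/2) ≤ 0; since b > 0 and a + c < π, this forces a + c ≥ π, a contradiction. Hence no such triple exists with b > 0. -/
open Real

/-- Trigonometric lemma from the proof of Theorem 2.6: there is no triple of
spherical side lengths `a, b, c ∈ (0, π)` with perimeter less than `π`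
satisfying both cosine-rule inequalities `cos c ≤ cos a · cos b` and
`cos a ≤ cos c · cos b`. -/
theorem spherical_trig_lemma
    (a b c : ℝ) (ha : a ∈ Set.Ioo 0 π) (hb : b ∈ Set.Ioo 0 π) (hc : c ∈ Set.Ioo 0 π)
    (hperim : a + b + c < π)
    (h1 : Real.cos c - Real.cos a * Real.cos b ≤ 0)
    (h2 : Real.cos a - Real.cos c * Real.cos b ≤ 0) :
    (1 - Real.cos b) * (Real.cos a + Real.cos c) ≤ 0 ∧
      Real.sin (b / 2) ^ 2 * Real.cos ((a + c) / 2) * Real.cos ((a - c) / 2) ≤ 0 ∧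
      False := by
  obtain ⟨hb0, hbπ⟩ := hb
  have key : (1 - Real.cos b) * (Real.cos a + Real.cos c) ≤ 0 := by nlinarith
  have hsum : Real.cos a + Real.cos c
      = 2 * Real.cos ((a + c) / 2) * Real.cos ((a - c) / 2) := by
    rw [Real.cos_add_cos]
  have hsin : Real.sin (b / 2) ^ 2 = (1 - Real.cos b) / 2 := by
    have hcb : Real.cos b = 1 - 2 * Real.sin (b / 2) ^ 2 := by
      have h2 : Real.cos (2 * (b/2)) = 1 - 2 * Real.sin (b/2)^2 := Real.cos_two_mul' (b/2) ▸ by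
        rw [Real.cos_sq' (b/2)]; ring
      rw [show 2*(b/2) = b by ring] at h2; exact h2
    linarith
  have key2 : Real.sin (b / 2) ^ 2 * Real.cos ((a + c) / 2) * Real.cos ((a - c) / 2) ≤ 0 := by
    rw [hsin]; nlinarith [key, hsum]
  refine ⟨key, key2, ?_⟩
  -- derive contradiction
  have h1' : Real.cos b < 1 := by
    rcases lt_or_eq_of_le (Real.cos_le_one b) with h|h
    · exact h
    · exfalso
      have := Real.cos_eq_one_iff_of_lt_of_lt (x := b) (by linarith [Real.pi_pos]) (by linarith)
      rw [this] at h
      linarith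
  have hcac : Real.cos a + Real.cos c ≤ 0 := by
    by_contra h
    push_neg at h
    nlinarith
  have hac2 : (a + c) / 2 ∈ Set.Ioo (-(π/2)) (π/2) := by
    constructor <;> [nlinarith [ha.1, hc.1, Real.pi_pos]; nlinarith [ha.1, hc.1]]
  have hamc : (a - c) / 2 ∈ Set.Ioo (-(π/2)) (π/2) := by
    constructor <;> nlinarith [ha.1, ha.2, hc.1, hc.2]
  have p1 : 0 < Real.cos ((a + c) / 2) := Real.cos_pos_of_mem_Ioo hac2
  have p2 : 0 < Real.cos ((a - c) / 2) := Real.cos_pos_of_mem_Ioo hamc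
  nlinarith [hsum]
end

section
/- Let H be a real Hilbert space, S₁, S₂ ⊆ H nonempty closed convex sets with S₁ compact (or with the infimum distance attained). If q ∈ S₁ satisfies q = P_{S₁}(P_{S₂}(q)) where P_{S₂}(q) exists, then dist(S₁, S₂) = ‖q - P_{S₂}(q)‖, i.e., the pair (q, P_{S₂}(q)) attains the distance inf{‖z₁ - z₂‖ : z₁ ∈ S₁, z₂ ∈ S₂} between the sets. -/
/-!
By convexity, each nearest-point property is equivalent to a variational inequality:
`⟪p₂ - q, z₁ - q⟫ ≤ 0` for `z₁ ∈ S₁` and `⟪q - p₂, z₂ - p₂⟫ ≤ 0` for `z₂ ∈ S₂`. Subtracting both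
from `‖q - p₂‖²` gives `‖q - p₂‖² ≤ ⟪z₁ - z₂, q - p₂⟫`, and Cauchy–Schwarz then yields
`‖q - p₂‖ ≤ ‖z₁ - z₂‖`.
-/

open RealInnerProductSpace

section

variable {F : Type*} [NormedAddCommGroup F] [InnerProductSpace ℝ F]

theorem real_inner_sub_nonpos_of_forall_norm_sub_le {K : Set F} (hK : Convex ℝ K) {u v : F}
    (hv : v ∈ K) (hmin : ∀ w ∈ K, ‖u - v‖ ≤ ‖u - w‖) : ∀ w ∈ K, ⟪u - v, w - v⟫ ≤ 0 := by
  have : Nonempty K := ⟨⟨v, hv⟩⟩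
  refine (norm_eq_iInf_iff_real_inner_le_zero hK hv).1 (le_antisymm ?_ ?_)
  · exact le_ciInf fun w => hmin w w.2
  · exact ciInf_le ⟨0, fun _ ⟨_, h⟩ => h ▸ norm_nonneg _⟩ (⟨v, hv⟩ : K)

theorem norm_sub_le_norm_sub_of_real_inner_nonpos {a b x y : F}
    (ha : ⟪b - a, x - a⟫ ≤ 0) (hb : ⟪a - b, y - b⟫ ≤ 0) : ‖a - b‖ ≤ ‖x - y‖ := by
  have hsq : ‖a - b‖ ^ 2 ≤ ‖x - y‖ * ‖a - b‖ :=
    calc ‖a - b‖ ^ 2 ≤ ‖a - b‖ ^ 2 - ⟪b - a, x - a⟫ - ⟪a - b, y - b⟫ := by linarith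
      _ = ⟪x - y, a - b⟫ := by
        rw [← real_inner_self_eq_norm_sq]
        simp only [inner_sub_left, inner_sub_right, real_inner_comm]
        ring
      _ ≤ ‖x - y‖ * ‖a - b‖ := real_inner_le_norm _ _
  rcases (norm_nonneg (a - b)).eq_or_lt with h | h
  · exact h ▸ norm_nonneg _
  · exact le_of_mul_le_mul_right (by rwa [← sq]) h

end

theorem fixed_point_attains_set_distance_general
    {H : Type*} [NormedAddCommGroup H] [InnerProductSpace ℝ H]
    (S₁ S₂ : Set H)
    (hconv₁ : Convex ℝ S₁) (hconv₂ : Convex ℝ S₂)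
    (q p₂ : H) (hq : q ∈ S₁) (hp₂ : p₂ ∈ S₂)
    (hnear₂ : ∀ z ∈ S₂, ‖q - p₂‖ ≤ ‖q - z‖)
    (hnear₁ : ∀ z ∈ S₁, ‖p₂ - q‖ ≤ ‖p₂ - z‖) :
    sInf {d : ℝ | ∃ z₁ ∈ S₁, ∃ z₂ ∈ S₂, d = ‖z₁ - z₂‖} = ‖q - p₂‖ := by
  have hbest : ∀ z₁ ∈ S₁, ∀ z₂ ∈ S₂, ‖q - p₂‖ ≤ ‖z₁ - z₂‖ := fun z₁ hz₁ z₂ hz₂ =>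
    norm_sub_le_norm_sub_of_real_inner_nonpos
      (real_inner_sub_nonpos_of_forall_norm_sub_le hconv₁ hq hnear₁ z₁ hz₁)
      (real_inner_sub_nonpos_of_forall_norm_sub_le hconv₂ hp₂ hnear₂ z₂ hz₂)
  refine IsLeast.csInf_eq ⟨⟨q, hq, p₂, hp₂, rfl⟩, ?_⟩
  rintro _ ⟨z₁, hz₁, z₂, hz₂, rfl⟩
  exact hbest z₁ hz₁ z₂ hz₂

/-- Fixed points of the composition of metric projections are best
approximation pairs: in a real Hilbert space, if `p₂` is the nearest point of
`S₂` to `q ∈ S₁` and `q` is the nearest point of `S₁` to `p₂`, then the pair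
`(q, p₂)` attains the distance between `S₁` and `S₂`. -/
theorem fixed_point_attains_set_distance
    {H : Type*} [NormedAddCommGroup H] [InnerProductSpace ℝ H] [CompleteSpace H]
    (S₁ S₂ : Set H) (hS₁ : S₁.Nonempty) (hS₂ : S₂.Nonempty)
    (hclosed₁ : IsClosed S₁) (hclosed₂ : IsClosed S₂)
    (hconv₁ : Convex ℝ S₁) (hconv₂ : Convex ℝ S₂)
    (hcompact₁ : IsCompact S₁)
    (q p₂ : H) (hq : q ∈ S₁) (hp₂ : p₂ ∈ S₂)
    (hnear₂ : ∀ z ∈ S₂, ‖q - p₂‖ ≤ ‖q - z‖)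
    (hnear₁ : ∀ z ∈ S₁, ‖p₂ - q‖ ≤ ‖p₂ - z‖) :
    sInf {d : ℝ | ∃ z₁ ∈ S₁, ∃ z₂ ∈ S₂, d = ‖z₁ - z₂‖} = ‖q - p₂‖ :=
  fixed_point_attains_set_distance_general S₁ S₂ hconv₁ hconv₂ q p₂ hq hp₂ hnear₂ hnear₁
end
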